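/- Let q = 6 + 2√5, σ = (1/√q)·[[1, q−1],[1, −1]] and τ = [[1, 0],[0, −1]]. Let W(x,y) ∈ ℂ[x,y] be invariant under both σ and τ, of even degree n = 2(5μ + ν) with μ ≥ 0 and 0 ≤ ν ≤ 4, and of the form x^n + Σ_{i≥1} A_i x^{n−i} y^i. Then there exist complex numbers a₀, …, a_μ such that W(x,y) = Σ_{r=0}^{μ} a_r · W_{2,q}(x,y)^{5μ+ν−5r} · W′₁₀(x,y)^r, where W′₁₀(x,y) = (ψ₅(x,y)² − W_{2,q}(x,y)⁵)/(25(5+2√5)) = y²(x²−y²)²(x²−(9+4√5)y²)². -/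

import Mathlib

noncomputable section

abbrev Cxy : Type := MvPolynomial (Fin 2) ℂ

def qval : ℝ := 6 + 2 * Real.sqrt 5

def sigmaMat : Matrix (Fin 2) (Fin 2) ℝ :=
  (Real.sqrt qval)⁻¹ • !![1, qval - 1; 1, -1]

def tauMat : Matrix (Fin 2) (Fin 2) ℝ := !![1, 0; 0, -1]

/-- The action `f^M(x,y) = f(ax+by, cx+dy)` of a 2×2 real matrix on ℂ[x,y]. -/
def act (M : Matrix (Fin 2) (Fin 2) ℝ) (f : Cxy) : Cxy :=
  MvPolynomial.aeval
    ![MvPolynomial.C ((M 0 0 : ℂ)) * MvPolynomial.X 0 + MvPolynomial.C ((M 0 1 : ℂ)) * MvPolynomial.X 1,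
      MvPolynomial.C ((M 1 0 : ℂ)) * MvPolynomial.X 0 + MvPolynomial.C ((M 1 1 : ℂ)) * MvPolynomial.X 1] f

def sqrt5C : ℂ := (Real.sqrt 5 : ℝ)

def W2q : Cxy :=
  MvPolynomial.X 0 ^ 2 + MvPolynomial.C (5 + 2 * sqrt5C) * MvPolynomial.X 1 ^ 2

def psi5 : Cxy :=
  MvPolynomial.X 0 ^ 5
    - MvPolynomial.C (50 + 20 * sqrt5C) * MvPolynomial.X 0 ^ 3 * MvPolynomial.X 1 ^ 2
    + MvPolynomial.C (225 + 100 * sqrt5C) * MvPolynomial.X 0 * MvPolynomial.X 1 ^ 4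

def W10' : Cxy := MvPolynomial.C ((25 * (5 + 2 * sqrt5C))⁻¹) * (psi5 ^ 2 - W2q ^ 5)

/-!
The group generated by `σ` and `τ` is dihedral of order 10: `τσ` is the rotation by `2π/5`.
Its eigenforms `ℓ₁ = x + γ y`, `ℓ₂ = x - γ y` (with `γ² = -(5 + 2√5)`) have eigenvalues
`λ, λ⁻¹` for a primitive fifth root of unity `λ`, and `τ` swaps them. Written in the
coordinates `ℓ₁, ℓ₂`, an invariant `W` is therefore a combination of symmetric pairs
`ℓ₁ᵃℓ₂ᵇ + ℓ₁ᵇℓ₂ᵃ` with `a ≡ b (mod 5)`, i.e. of `W2q ^ b * (ℓ₁ ^ 10k + ℓ₂ ^ 10k)`, since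
`W2q = ℓ₁ ℓ₂`. As `ψ₅ = (ℓ₁⁵ + ℓ₂⁵)/2`, we get `ℓ₁¹⁰ + ℓ₂¹⁰ = 100 (5 + 2√5) W10' + 2 W2q⁵`,
and Newton's recursion puts every power sum `ℓ₁ ^ 10k + ℓ₂ ^ 10k` in `ℂ[W2q⁵, W10']`.
-/

namespace MvPolynomial

variable {ι R : Type*} [Fintype ι] [CommRing R]

def linSubst (M : Matrix ι ι R) : MvPolynomial ι R →ₐ[R] MvPolynomial ι R :=
  aeval fun i => ∑ j, C (M i j) * X j

@[simp]
lemma linSubst_X (M : Matrix ι ι R) (i : ι) : linSubst M (X i) = ∑ j, C (M i j) * X j :=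
  aeval_X _ _

@[simp]
lemma linSubst_C (M : Matrix ι ι R) (a : R) : linSubst M (C a) = C a :=
  aeval_C _ _

lemma linSubst_diagonal [DecidableEq ι] (d : ι → R) :
    linSubst (Matrix.diagonal d) = aeval fun i => C (d i) * X i := by
  ext i : 1
  simp [Matrix.diagonal_apply, apply_ite C, ite_mul]

lemma linSubst_mul (M N : Matrix ι ι R) :
    linSubst (M * N) = (linSubst N).comp (linSubst M) := by
  ext i : 1
  simp only [AlgHom.comp_apply, linSubst_X, linSubst_C, map_sum, map_mul, Matrix.mul_apply,
    Finset.mul_sum, Finset.sum_mul, ← mul_assoc]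
  rw [Finset.sum_comm]

lemma linSubst_one [DecidableEq ι] : linSubst (1 : Matrix ι ι R) = AlgHom.id R _ := by
  rw [← Matrix.diagonal_one, linSubst_diagonal]
  ext i : 1
  simp

lemma linSubst_linSubst (M N : Matrix ι ι R) (f : MvPolynomial ι R) :
    linSubst N (linSubst M f) = linSubst (M * N) f := by
  rw [linSubst_mul, AlgHom.comp_apply]

lemma linSubst_nonsing_inv_linSubst [DecidableEq ι] {M : Matrix ι ι R} (hM : IsUnit M.det)
    (f : MvPolynomial ι R) : linSubst M⁻¹ (linSubst M f) = f := by
  rw [linSubst_linSubst, Matrix.mul_nonsing_inv _ hM, linSubst_one, AlgHom.id_apply]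

lemma linSubst_linSubst_nonsing_inv [DecidableEq ι] {M : Matrix ι ι R} (hM : IsUnit M.det)
    (f : MvPolynomial ι R) : linSubst M (linSubst M⁻¹ f) = f := by
  rw [linSubst_linSubst, Matrix.nonsing_inv_mul _ hM, linSubst_one, AlgHom.id_apply]

lemma linSubst_fixed_iff_of_mul_eq [DecidableEq ι] {M A B : Matrix ι ι R} (hM : IsUnit M.det)
    (h : M * A = B * M) (f : MvPolynomial ι R) :
    linSubst A (linSubst M f) = linSubst M f ↔ linSubst B f = f := by
  rw [linSubst_linSubst, h, ← linSubst_linSubst]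
  exact (Function.LeftInverse.injective (linSubst_nonsing_inv_linSubst hM)).eq_iff

lemma IsHomogeneous.linSubst {f : MvPolynomial ι R} {n : ℕ} (hf : f.IsHomogeneous n)
    (M : Matrix ι ι R) : (linSubst M f).IsHomogeneous n := by
  have := hf.aeval (fun i => ∑ j, C (M i j) * X j) fun i =>
    IsHomogeneous.sum _ _ _ fun j _ => isHomogeneous_C_mul_X (M i j) j
  rwa [one_mul] at this

lemma coeff_linSubst_diagonal [DecidableEq ι] (d : ι → R) (f : MvPolynomial ι R) (m : ι →₀ ℕ) :
    coeff m (linSubst (Matrix.diagonal d) f) = (m.prod fun i k => d i ^ k) * coeff m f := by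
  induction f using MvPolynomial.induction_on' with
  | monomial u a =>
    have : linSubst (Matrix.diagonal d) (monomial u a) =
        monomial u ((u.prod fun i k => d i ^ k) * a) := by
      rw [linSubst_diagonal, aeval_monomial, monomial_eq, map_mul, algebraMap_eq, map_finsuppProd]
      simp only [mul_pow, Finsupp.prod_mul, map_pow]
      ring
    rw [this, coeff_monomial, coeff_monomial]
    split_ifs with h
    · rw [h]
    · rw [mul_zero]
  | add p q hp hq => rw [map_add, coeff_add, coeff_add, hp, hq, mul_add]

lemma aeval_add_aeval_swap {R S : Type*} [CommSemiring R] [CommSemiring S]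
    [Algebra R S] (g₀ g₁ : S) (P : MvPolynomial (Fin 2) R) :
    aeval ![g₀, g₁] P + aeval ![g₁, g₀] P =
      ∑ m ∈ P.support, coeff m P • (g₀ ^ m 0 * g₁ ^ m 1 + g₀ ^ m 1 * g₁ ^ m 0) := by
  simp only [aeval_def, eval₂_eq', Fin.prod_univ_two, ← Finset.sum_add_distrib]
  refine Finset.sum_congr rfl fun m _ => ?_
  simp [Algebra.smul_def]
  ring

lemma IsHomogeneous.add_eq_of_mem_support {R : Type*} [CommSemiring R]
    {P : MvPolynomial (Fin 2) R} {n : ℕ} (hP : P.IsHomogeneous n) {m : Fin 2 →₀ ℕ}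
    (hm : m ∈ P.support) : m 0 + m 1 = n := by
  have := hP (mem_support_iff.1 hm)
  simpa [Finsupp.weight_apply, Finsupp.sum_fintype, Fin.sum_univ_two] using this

lemma isHomogeneous_X_pow_add_sum {R : Type*} [CommSemiring R] (n : ℕ) (A : ℕ → R) :
    (X 0 ^ n + ∑ i ∈ Finset.Icc 1 n, C (A i) * X 0 ^ (n - i) * X 1 ^ i :
      MvPolynomial (Fin 2) R).IsHomogeneous n := by
  refine (isHomogeneous_X_pow _ _).add (IsHomogeneous.sum _ _ _ fun i hi => ?_)
  have := ((isHomogeneous_X_pow (R := R) (0 : Fin 2) (n - i)).mul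
    (isHomogeneous_X_pow 1 i)).C_mul (A i)
  rwa [← mul_assoc, Nat.sub_add_cancel (Finset.mem_Icc.1 hi).2] at this

end MvPolynomial

namespace SigmaTau

open MvPolynomial

lemma sqrt5C_sq : sqrt5C ^ 2 = 5 := by
  rw [sqrt5C, ← Complex.ofReal_pow, Real.sq_sqrt (by norm_num : (0 : ℝ) ≤ 5)]
  norm_num

lemma sqrt_qval : Real.sqrt qval = 1 + Real.sqrt 5 := by
  have h5 : Real.sqrt 5 ^ 2 = 5 := Real.sq_sqrt (by norm_num)
  rw [show qval = (1 + Real.sqrt 5) ^ 2 by rw [qval]; linear_combination -h5,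
    Real.sqrt_sq (by positivity)]

lemma one_add_sqrt5C_ne_zero : 1 + sqrt5C ≠ 0 := by
  rw [sqrt5C, ← Complex.ofReal_one, ← Complex.ofReal_add, Complex.ofReal_ne_zero]
  positivity

lemma five_add_two_sqrt5C_ne_zero : 5 + 2 * sqrt5C ≠ 0 := by
  rw [sqrt5C, show (5 : ℂ) + 2 * (Real.sqrt 5 : ℝ) = ((5 + 2 * Real.sqrt 5 : ℝ) : ℂ) by
    push_cast; ring, Complex.ofReal_ne_zero]
  positivity

def gam : ℂ := Complex.I * (Real.sqrt (5 + 2 * Real.sqrt 5) : ℝ)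

lemma gam_sq : gam ^ 2 = -(5 + 2 * sqrt5C) := by
  rw [gam, mul_pow, Complex.I_sq, ← Complex.ofReal_pow, Real.sq_sqrt (by positivity), sqrt5C]
  push_cast
  ring

lemma gam_ne_zero : gam ≠ 0 := by
  intro h
  have := gam_sq
  rw [h, zero_pow two_ne_zero, zero_eq_neg] at this
  exact five_add_two_sqrt5C_ne_zero this

def lam : ℂ := (1 - gam) / (1 + sqrt5C)

lemma lam_inv : lam⁻¹ = (1 + gam) / (1 + sqrt5C) := by
  refine inv_eq_of_mul_eq_one_right ?_
  rw [lam, div_mul_div_comm, div_eq_one_iff_eq (mul_ne_zero one_add_sqrt5C_ne_zero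
    one_add_sqrt5C_ne_zero)]
  linear_combination -gam_sq - sqrt5C_sq

lemma lam_pow_five : lam ^ 5 = 1 := by
  rw [lam, div_pow, div_eq_one_iff_eq (pow_ne_zero _ one_add_sqrt5C_ne_zero)]
  linear_combination
    (-gam ^ 3 + 5 * gam ^ 2 + (-5 + 2 * sqrt5C) * gam + (-15 - 10 * sqrt5C)) * gam_sq
    + (-4 * gam - sqrt5C ^ 3 - 5 * sqrt5C ^ 2 - 15 * sqrt5C - 15) * sqrt5C_sq

lemma lam_ne_one : lam ≠ 1 := by
  intro h
  rw [lam, div_eq_one_iff_eq one_add_sqrt5C_ne_zero] at h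
  have hs : sqrt5C = -5 := by
    linear_combination (1 / 2 : ℂ) * gam_sq - (1 / 2 : ℂ) * sqrt5C_sq
      + (1 / 2 : ℂ) * (gam - sqrt5C) * h
  have := sqrt5C_sq
  rw [hs] at this
  norm_num at this

lemma orderOf_lam : orderOf lam = 5 :=
  have : Fact (Nat.Prime 5) := ⟨by norm_num⟩
  orderOf_eq_prime lam_pow_five lam_ne_one

lemma act_eq_linSubst (M : Matrix (Fin 2) (Fin 2) ℝ) (f : Cxy) :
    act M f = linSubst (M.map (↑)) f := by
  unfold act linSubst
  refine congrArg (fun g => aeval g f) (funext fun i => ?_)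
  fin_cases i <;> simp [Fin.sum_univ_two]

lemma sigmaMat_map :
    sigmaMat.map ((↑) : ℝ → ℂ) = (1 + sqrt5C)⁻¹ • !![1, 5 + 2 * sqrt5C; 1, -1] := by
  ext i j
  fin_cases i <;> fin_cases j <;> simp [sigmaMat, sqrt_qval, sqrt5C]
  left
  rw [qval]
  push_cast
  ring

lemma tauMat_map : tauMat.map ((↑) : ℝ → ℂ) = !![1, 0; 0, -1] := by
  ext i j
  fin_cases i <;> fin_cases j <;> simp [tauMat]

-- Rows: the coefficients of the eigenforms `ℓ₁ = x + γ y` and `ℓ₂ = x - γ y` of `τσ`.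
def eigenMat : Matrix (Fin 2) (Fin 2) ℂ := !![1, gam; 1, -gam]

lemma isUnit_det_eigenMat : IsUnit eigenMat.det := by
  rw [eigenMat, Matrix.det_fin_two_of, isUnit_iff_ne_zero]
  intro h
  exact gam_ne_zero (by linear_combination -h / 2)

lemma eigenMat_mul_tau : eigenMat * tauMat.map (↑) = !![0, 1; 1, 0] * eigenMat := by
  rw [tauMat_map]
  ext i j
  fin_cases i <;> fin_cases j <;> simp [eigenMat, Matrix.mul_apply, Fin.sum_univ_two]

lemma eigenMat_mul_rot :
    eigenMat * (tauMat.map (↑) * sigmaMat.map (↑)) = Matrix.diagonal ![lam, lam⁻¹] * eigenMat := by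
  rw [tauMat_map, sigmaMat_map, lam_inv, lam]
  ext i j
  fin_cases i <;> fin_cases j <;>
    simp [eigenMat, Matrix.mul_apply, Fin.sum_univ_two] <;>
    field_simp [one_add_sqrt5C_ne_zero] <;>
    first | linear_combination gam_sq | ring

def ℓ₁ : Cxy := X 0 + C gam * X 1

def ℓ₂ : Cxy := X 0 - C gam * X 1

lemma linSubst_eigenMat : linSubst eigenMat = aeval ![ℓ₁, ℓ₂] := by
  ext i : 1
  fin_cases i <;> simp [eigenMat, ℓ₁, ℓ₂, Fin.sum_univ_two, sub_eq_add_neg]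

lemma linSubst_swap_mul_eigenMat : linSubst (!![0, 1; 1, 0] * eigenMat) = aeval ![ℓ₂, ℓ₁] := by
  ext i : 1
  fin_cases i <;> simp [eigenMat, ℓ₁, ℓ₂, Fin.sum_univ_two, sub_eq_add_neg]

lemma C_gam_sq : (C gam : Cxy) ^ 2 = -(5 + 2 * C sqrt5C) := by
  rw [← map_pow, gam_sq, map_neg, map_add, map_mul, map_ofNat, map_ofNat]

lemma C_sqrt5C_sq : (C sqrt5C : Cxy) ^ 2 = 5 := by
  rw [← map_pow, sqrt5C_sq, map_ofNat]

lemma W2q_eq_mul : W2q = ℓ₁ * ℓ₂ := by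
  simp only [W2q, ℓ₁, ℓ₂, map_add, map_mul, map_ofNat]
  linear_combination (X 1 : Cxy) ^ 2 * C_gam_sq

lemma ℓ₁_pow_five_add_ℓ₂_pow_five : ℓ₁ ^ 5 + ℓ₂ ^ 5 = 2 * psi5 := by
  simp only [psi5, ℓ₁, ℓ₂, map_add, map_mul, map_ofNat]
  linear_combination (20 * X 0 ^ 3 * X 1 ^ 2 + 10 * X 0 * X 1 ^ 4 * (C gam ^ 2 - 5 - 2 * C sqrt5C))
    * C_gam_sq + 40 * X 0 * X 1 ^ 4 * C_sqrt5C_sq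

lemma C_mul_W10' : C (25 * (5 + 2 * sqrt5C)) * W10' = psi5 ^ 2 - W2q ^ 5 := by
  rw [W10', ← mul_assoc, ← map_mul,
    mul_inv_cancel₀ (mul_ne_zero (by norm_num) five_add_two_sqrt5C_ne_zero), map_one, one_mul]

lemma ℓ₁_pow_ten_add_ℓ₂_pow_ten :
    ℓ₁ ^ 10 + ℓ₂ ^ 10 = (100 * (5 + 2 * sqrt5C)) • W10' + (2 : ℂ) • W2q ^ 5 := by
  rw [smul_eq_C_mul, smul_eq_C_mul,
    show 100 * (5 + 2 * sqrt5C) = 4 * (25 * (5 + 2 * sqrt5C)) by ring, map_mul, mul_assoc,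
    C_mul_W10', W2q_eq_mul, map_ofNat, map_ofNat]
  linear_combination (ℓ₁ ^ 5 + ℓ₂ ^ 5 + 2 * psi5) * ℓ₁_pow_five_add_ℓ₂_pow_five

-- The homogeneous forms of degree `2N` in `ℂ[W2q, W10']`.
def spanW2qW10 (N : ℕ) : Submodule ℂ Cxy :=
  Submodule.span ℂ (Set.range fun r : Fin (N / 5 + 1) => W2q ^ (N - 5 * r) * W10' ^ (r : ℕ))

lemma pow_mul_pow_mem_spanW2qW10 {i j N : ℕ} (h : i + 5 * j = N) :
    W2q ^ i * W10' ^ j ∈ spanW2qW10 N :=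
  Submodule.subset_span ⟨⟨j, by omega⟩, by simp only; congr 2; omega⟩

lemma W2q_pow_mem_spanW2qW10 (i : ℕ) : W2q ^ i ∈ spanW2qW10 i := by
  simpa using pow_mul_pow_mem_spanW2qW10 (i := i) (j := 0) rfl

lemma W10'_mem_spanW2qW10 : W10' ∈ spanW2qW10 5 := by
  simpa using pow_mul_pow_mem_spanW2qW10 (i := 0) (j := 1) rfl

lemma mul_mem_spanW2qW10 {a b : ℕ} {f g : Cxy} (hf : f ∈ spanW2qW10 a) (hg : g ∈ spanW2qW10 b) :
    f * g ∈ spanW2qW10 (a + b) := by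
  suffices spanW2qW10 a * spanW2qW10 b ≤ spanW2qW10 (a + b) from this (Submodule.mul_mem_mul hf hg)
  rw [spanW2qW10, spanW2qW10, Submodule.span_mul_span, Submodule.span_le]
  rintro _ ⟨_, ⟨r, rfl⟩, _, ⟨s, rfl⟩, rfl⟩
  dsimp only
  rw [show W2q ^ (a - 5 * r) * W10' ^ (r : ℕ) * (W2q ^ (b - 5 * s) * W10' ^ (s : ℕ)) =
    W2q ^ (a - 5 * r + (b - 5 * s)) * W10' ^ (r + s : ℕ) by ring]
  exact pow_mul_pow_mem_spanW2qW10 (by omega)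

lemma ℓ₁_pow_ten_add_ℓ₂_pow_ten_mem_spanW2qW10 : ℓ₁ ^ 10 + ℓ₂ ^ 10 ∈ spanW2qW10 5 := by
  rw [ℓ₁_pow_ten_add_ℓ₂_pow_ten]
  exact Submodule.add_mem _ (Submodule.smul_mem _ _ W10'_mem_spanW2qW10)
    (Submodule.smul_mem _ _ (W2q_pow_mem_spanW2qW10 5))

lemma ℓ₁_pow_add_ℓ₂_pow_mem_spanW2qW10 :
    ∀ k : ℕ, ℓ₁ ^ (10 * k) + ℓ₂ ^ (10 * k) ∈ spanW2qW10 (5 * k)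
  | 0 => by simpa [two_smul] using Submodule.smul_mem _ (2 : ℂ) (W2q_pow_mem_spanW2qW10 0)
  | 1 => ℓ₁_pow_ten_add_ℓ₂_pow_ten_mem_spanW2qW10
  | k + 2 => by
    have hrec : ℓ₁ ^ (10 * (k + 2)) + ℓ₂ ^ (10 * (k + 2)) =
        (ℓ₁ ^ 10 + ℓ₂ ^ 10) * (ℓ₁ ^ (10 * (k + 1)) + ℓ₂ ^ (10 * (k + 1)))
          - (ℓ₁ * ℓ₂) ^ 10 * (ℓ₁ ^ (10 * k) + ℓ₂ ^ (10 * k)) := by ring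
    rw [hrec, ← W2q_eq_mul, show 5 * (k + 2) = 5 + 5 * (k + 1) by ring]
    refine Submodule.sub_mem _ (mul_mem_spanW2qW10 ℓ₁_pow_ten_add_ℓ₂_pow_ten_mem_spanW2qW10
      (ℓ₁_pow_add_ℓ₂_pow_mem_spanW2qW10 (k + 1))) ?_
    rw [show 5 + 5 * (k + 1) = 10 + 5 * k by ring]
    exact mul_mem_spanW2qW10 (W2q_pow_mem_spanW2qW10 10) (ℓ₁_pow_add_ℓ₂_pow_mem_spanW2qW10 k)

lemma ℓ₁_pow_mul_ℓ₂_pow_add_mem_spanW2qW10 {a b N : ℕ} (hab : a + b = 2 * N)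
    (hmod : a ≡ b [MOD 5]) : ℓ₁ ^ a * ℓ₂ ^ b + ℓ₁ ^ b * ℓ₂ ^ a ∈ spanW2qW10 N := by
  wlog hba : b ≤ a generalizing a b
  · rw [add_comm]
    exact this (by omega) hmod.symm (by omega)
  have hmod' : a % 5 = b % 5 := hmod
  obtain ⟨k, rfl⟩ : ∃ k, a = b + 10 * k := ⟨(a - b) / 10, by omega⟩
  rw [show ℓ₁ ^ (b + 10 * k) * ℓ₂ ^ b + ℓ₁ ^ b * ℓ₂ ^ (b + 10 * k) =
      W2q ^ b * (ℓ₁ ^ (10 * k) + ℓ₂ ^ (10 * k)) by rw [W2q_eq_mul]; ring,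
    show N = b + 5 * k by omega]
  exact mul_mem_spanW2qW10 (W2q_pow_mem_spanW2qW10 b) (ℓ₁_pow_add_ℓ₂_pow_mem_spanW2qW10 k)

lemma exists_eq_sum_of_mem_spanW2qW10 {N : ℕ} {f : Cxy} (hf : f ∈ spanW2qW10 N) :
    ∃ a : ℕ → ℂ, f = ∑ r ∈ Finset.range (N / 5 + 1), C (a r) * W2q ^ (N - 5 * r) * W10' ^ r := by
  obtain ⟨c, rfl⟩ := (Submodule.mem_span_range_iff_exists_fun ℂ).1 hf
  refine ⟨fun r => if h : r < N / 5 + 1 then c ⟨r, h⟩ else 0, ?_⟩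
  rw [← Fin.sum_univ_eq_sum_range]
  refine Finset.sum_congr rfl fun r _ => ?_
  simp [r.isLt, smul_eq_C_mul, mul_assoc]

lemma modEq_of_mem_support {P : Cxy} (hP : linSubst (Matrix.diagonal ![lam, lam⁻¹]) P = P)
    {m : Fin 2 →₀ ℕ} (hm : m ∈ P.support) : m 0 ≡ m 1 [MOD 5] := by
  have hcoeff := coeff_linSubst_diagonal ![lam, lam⁻¹] P m
  rw [hP, Finsupp.prod_fintype _ _ (by simp), Fin.prod_univ_two, eq_comm,
    mul_eq_right₀ (mem_support_iff.1 hm)] at hcoeff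
  have hfin : IsOfFinOrder lam := orderOf_pos_iff.1 (by rw [orderOf_lam]; norm_num)
  rw [← orderOf_lam, ← hfin.pow_eq_pow_iff_modEq,
    ← mul_inv_eq_one₀ (pow_ne_zero _ hfin.isUnit.ne_zero), ← inv_pow]
  simpa using hcoeff

lemma mem_spanW2qW10_of_invariant {N : ℕ} {W : Cxy} (hW : W.IsHomogeneous (2 * N))
    (hσ : act sigmaMat W = W) (hτ : act tauMat W = W) : W ∈ spanW2qW10 N := by
  set P := linSubst eigenMat⁻¹ W
  have hWP : linSubst eigenMat P = W := linSubst_linSubst_nonsing_inv isUnit_det_eigenMat W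
  have hswap : linSubst !![0, 1; 1, 0] P = P := by
    rw [← linSubst_fixed_iff_of_mul_eq isUnit_det_eigenMat eigenMat_mul_tau, hWP,
      ← act_eq_linSubst, hτ]
  have hrot : linSubst (Matrix.diagonal ![lam, lam⁻¹]) P = P := by
    rw [← linSubst_fixed_iff_of_mul_eq isUnit_det_eigenMat eigenMat_mul_rot, ← linSubst_linSubst,
      hWP, ← act_eq_linSubst, ← act_eq_linSubst, hτ, hσ]
  have h2W : (2 : ℂ) • W = aeval ![ℓ₁, ℓ₂] P + aeval ![ℓ₂, ℓ₁] P := by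
    rw [two_smul, ← linSubst_eigenMat, ← linSubst_swap_mul_eigenMat, ← linSubst_linSubst, hswap,
      hWP]
  rw [← Submodule.smul_mem_iff _ (two_ne_zero : (2 : ℂ) ≠ 0), h2W, aeval_add_aeval_swap]
  refine Submodule.sum_mem _ fun m hm => Submodule.smul_mem _ _ ?_
  exact ℓ₁_pow_mul_ℓ₂_pow_add_mem_spanW2qW10 ((hW.linSubst _).add_eq_of_mem_support hm)
    (modEq_of_mem_support hrot hm)

end SigmaTau

theorem invariant_even_degree_decomposition (μ ν n : ℕ) (hν : ν ≤ 4)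
    (hn : n = 2 * (5 * μ + ν)) (A : ℕ → ℂ) (W : Cxy)
    (hW : W = MvPolynomial.X 0 ^ n +
      ∑ i ∈ Finset.Icc 1 n, MvPolynomial.C (A i) * MvPolynomial.X 0 ^ (n - i) *
        MvPolynomial.X 1 ^ i)
    (hσ : act sigmaMat W = W) (hτ : act tauMat W = W) :
    ∃ a : ℕ → ℂ, W = ∑ r ∈ Finset.range (μ + 1),
      MvPolynomial.C (a r) * W2q ^ (5 * μ + ν - 5 * r) * W10' ^ r := by
  have hhom : W.IsHomogeneous (2 * (5 * μ + ν)) := by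
    rw [← hn, hW]
    exact MvPolynomial.isHomogeneous_X_pow_add_sum n A
  obtain ⟨a, ha⟩ := SigmaTau.exists_eq_sum_of_mem_spanW2qW10
    (SigmaTau.mem_spanW2qW10_of_invariant hhom hσ hτ)
  rw [show (5 * μ + ν) / 5 = μ by omega] at ha
  exact ⟨a, ha⟩

end
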